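/- Let ω, a ∈ ℝ³ with θ = ‖ω‖ ≠ 0, let Ω = [ω]^∧, let A_N be the 3×2 real matrix with columns (a, 0), let B = [[0,1],[0,0]], and let N be the 5×5 block matrix [[Ω, A_N],[0₂ₓ₃, B]]. Then for every t ∈ ℝ, exp(tN) = [[exp(tΩ), P_N(t)],[0₂ₓ₃, I₂ + tB]], where P_N(t) is the 3×2 matrix whose first column is ( t·I₃ + ((1 − cos(θt))/θ²)·Ω + ((θt − sin(θt))/θ³)·Ω² )·a and whose second column is ( (t²/2)·I₃ + ((θt − sin(θt))/θ³)·Ω + ((θ²t²/2 − 1 + cos(θt))/θ⁴)·Ω² )·a. -/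

import Mathlib

open Matrix

/-- The hat map `[ω]^∧`: the skew-symmetric matrix satisfying `([ω]^∧) x = ω × x`. -/
noncomputable def hat (ω : EuclideanSpace ℝ (Fin 3)) : Matrix (Fin 3) (Fin 3) ℝ :=
  !![0, -ω 2, ω 1; ω 2, 0, -ω 0; -ω 1, ω 0, 0]

/-- The 3×2 matrix with the two given columns. -/
noncomputable def cols (u w : Fin 3 → ℝ) : Matrix (Fin 3) (Fin 2) ℝ :=
  Matrix.of fun i j => ![u i, w i] j

/-! Both sides solve `F' = N * F`, `F 0 = 1`. For the block upper-triangular `N` this reduces to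
the bottom-right block `exp (t • B) = 1 + t • B` (as `B * B = 0`) and the top-right block `P`
solving `P' = Ω * P + A_N * (1 + t • B)`, `P 0 = 0`. Since `Ω ^ 3 = -θ ^ 2 • Ω`, the integral
`Φ₁ t = ∫₀ᵗ exp (s • Ω) ds` and its primitive `Φ₂` are quadratic in `Ω`, and
`P_N = Φ₁ t * A_N + Φ₂ t * (A_N * B)` solves that equation. -/

section ExpODE

variable {𝕂 𝔸 : Type*} [RCLike 𝕂] [NormedRing 𝔸] [NormedAlgebra 𝕂 𝔸] [CompleteSpace 𝔸]

/-- `exp (-u • x) * f u` has zero derivative. -/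
theorem exp_smul_eq_of_hasDerivAt_mul {x : 𝔸} {f : 𝕂 → 𝔸} (hf0 : f 0 = 1)
    (hf : ∀ s, HasDerivAt f (x * f s) s) (t : 𝕂) : NormedSpace.exp (t • x) = f t := by
  let g : 𝕂 → 𝔸 := fun u => NormedSpace.exp (u • -x) * f u
  have hg : ∀ s, HasDerivAt g 0 s := fun s => by
    have hcomm : Commute x (NormedSpace.exp (s • -x)) :=
      (((Commute.refl x).neg_right).smul_right s).exp_right
    refine ((hasDerivAt_exp_smul_const' (-x) s).mul (hf s)).congr_deriv ?_
    rw [neg_mul, ← mul_assoc, hcomm.eq, neg_mul, neg_add_cancel]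
  have hgt : g t = 1 := by
    rw [is_const_of_deriv_eq_zero (fun s => (hg s).differentiableAt) (fun s => (hg s).deriv) t 0]
    simp [g, hf0]
  let _ : NormedAlgebra ℚ 𝔸 := NormedAlgebra.restrictScalars ℚ 𝕂 𝔸
  have hinv : NormedSpace.exp (t • x) * NormedSpace.exp (t • -x) = 1 := by
    rw [← NormedSpace.exp_add_of_commute (((Commute.refl x).neg_right.smul_left t).smul_right t)]
    simp
  calc NormedSpace.exp (t • x) = NormedSpace.exp (t • x) * g t := by rw [hgt, mul_one]
    _ = f t := by rw [← mul_assoc, hinv, one_mul]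

end ExpODE

section ExpIntegral

open Real

theorem hasDerivAt_one_sub_cos_mul_div_sq {θ : ℝ} (hθ : θ ≠ 0) (s : ℝ) :
    HasDerivAt (fun u => (1 - cos (θ * u)) / θ ^ 2) (sin (θ * s) / θ) s := by
  have := (((hasDerivAt_id' s).const_mul θ).cos.const_sub 1).div_const (θ ^ 2)
  exact this.congr_deriv (by field_simp)

theorem hasDerivAt_mul_sub_sin_mul_div_cube {θ : ℝ} (hθ : θ ≠ 0) (s : ℝ) :
    HasDerivAt (fun u => (θ * u - sin (θ * u)) / θ ^ 3) ((1 - cos (θ * s)) / θ ^ 2) s := by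
  have hlin := (hasDerivAt_id' s).const_mul θ
  have := (hlin.sub hlin.sin).div_const (θ ^ 3)
  exact this.congr_deriv (by field_simp)

theorem hasDerivAt_sq_mul_sq_div_two_sub_one_add_cos_mul_div_pow_four {θ : ℝ} (hθ : θ ≠ 0)
    (s : ℝ) :
    HasDerivAt (fun u => (θ ^ 2 * u ^ 2 / 2 - 1 + cos (θ * u)) / θ ^ 4)
      ((θ * s - sin (θ * s)) / θ ^ 3) s := by
  have hsq := ((hasDerivAt_pow 2 s).const_mul (θ ^ 2)).div_const 2
  have := ((hsq.sub_const 1).add ((hasDerivAt_id' s).const_mul θ).cos).div_const (θ ^ 4)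
  exact this.congr_deriv (by field_simp; ring)

variable {R : Type*} [Ring R] [Algebra ℝ R]

/-- When `X ^ 3 = -θ ^ 2 • X`, `expIntegral₁ θ X t = ∫₀ᵗ exp (s • X) ds` and
`expIntegral₂ θ X t = ∫₀ᵗ expIntegral₁ θ X s ds`. -/
noncomputable def expIntegral₁ (θ : ℝ) (X : R) (t : ℝ) : R :=
  t • 1 + ((1 - cos (θ * t)) / θ ^ 2) • X + ((θ * t - sin (θ * t)) / θ ^ 3) • X ^ 2

noncomputable def expIntegral₂ (θ : ℝ) (X : R) (t : ℝ) : R :=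
  (t ^ 2 / 2) • 1 + ((θ * t - sin (θ * t)) / θ ^ 3) • X
    + ((θ ^ 2 * t ^ 2 / 2 - 1 + cos (θ * t)) / θ ^ 4) • X ^ 2

variable {θ : ℝ} {X : R}

@[simp] theorem expIntegral₁_zero : expIntegral₁ θ X 0 = 0 := by simp [expIntegral₁]

@[simp] theorem expIntegral₂_zero : expIntegral₂ θ X 0 = 0 := by simp [expIntegral₂]

theorem mul_expIntegral₁ (hX : X ^ 3 = -θ ^ 2 • X) (hθ : θ ≠ 0) (t : ℝ) :
    X * expIntegral₁ θ X t = (sin (θ * t) / θ) • X + ((1 - cos (θ * t)) / θ ^ 2) • X ^ 2 := by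
  simp only [expIntegral₁, mul_add, mul_smul_comm, mul_one, ← sq, ← pow_succ', hX, smul_smul]
  match_scalars <;> field_simp
  ring

theorem expIntegral₁_eq_smul_one_add_mul_expIntegral₂ (hX : X ^ 3 = -θ ^ 2 • X) (hθ : θ ≠ 0)
    (t : ℝ) : expIntegral₁ θ X t = t • 1 + X * expIntegral₂ θ X t := by
  simp only [expIntegral₁, expIntegral₂, mul_add, mul_smul_comm, mul_one, ← sq, ← pow_succ', hX,
    smul_smul]
  match_scalars <;> field_simp
  ring

end ExpIntegral

section HasDerivAtExpIntegral

variable {R : Type*} [NormedRing R] [NormedAlgebra ℝ R] {θ : ℝ} {X : R}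

theorem hasDerivAt_expIntegral₂ (hθ : θ ≠ 0) (s : ℝ) :
    HasDerivAt (expIntegral₂ θ X) (expIntegral₁ θ X s) s := by
  have hsq : HasDerivAt (fun u : ℝ => u ^ 2 / 2) s s :=
    ((hasDerivAt_pow 2 s).div_const 2).congr_deriv (by ring)
  exact ((hsq.smul_const 1).add ((hasDerivAt_mul_sub_sin_mul_div_cube hθ s).smul_const X)).add
    ((hasDerivAt_sq_mul_sq_div_two_sub_one_add_cos_mul_div_pow_four hθ s).smul_const (X ^ 2))

theorem hasDerivAt_expIntegral₁ (hX : X ^ 3 = -θ ^ 2 • X) (hθ : θ ≠ 0) (s : ℝ) :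
    HasDerivAt (expIntegral₁ θ X) (1 + X * expIntegral₁ θ X s) s := by
  have := (((hasDerivAt_id s).smul_const (1 : R)).add
    ((hasDerivAt_one_sub_cos_mul_div_sq hθ s).smul_const X)).add
    ((hasDerivAt_mul_sub_sin_mul_div_cube hθ s).smul_const (X ^ 2))
  exact this.congr_deriv (by rw [mul_expIntegral₁ hX hθ, one_smul, add_assoc])

end HasDerivAtExpIntegral

section MatrixCalculus

-- Any norm would do: it only makes calculus available and induces the entrywise topology in
-- which the statements below are elaborated.
attribute [local instance] Matrix.linftyOpNormedAddCommGroup Matrix.linftyOpNormedSpace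
  Matrix.linftyOpNormedRing Matrix.linftyOpNormedAlgebra

variable {𝕜 : Type*} [NontriviallyNormedField 𝕜] [CompleteSpace 𝕜] {l m n o : Type*}
  [Fintype l] [Fintype m] [Fintype n] [Fintype o] {x : 𝕜}

theorem HasDerivAt.matrix_mul_const {M : 𝕜 → Matrix m n 𝕜} {M' : Matrix m n 𝕜}
    (hM : HasDerivAt M M' x) (C : Matrix n o 𝕜) :
    HasDerivAt (fun u => M u * C) (M' * C) x :=
  (LinearMap.toContinuousLinearMap (mulRightLinearMap m 𝕜 C)).hasFDerivAt.comp_hasDerivAt x hM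

theorem HasDerivAt.matrix_fromBlocks {A : 𝕜 → Matrix n l 𝕜} {B : 𝕜 → Matrix n m 𝕜}
    {C : 𝕜 → Matrix o l 𝕜} {D : 𝕜 → Matrix o m 𝕜}
    {A' : Matrix n l 𝕜} {B' : Matrix n m 𝕜} {C' : Matrix o l 𝕜} {D' : Matrix o m 𝕜}
    (hA : HasDerivAt A A' x) (hB : HasDerivAt B B' x) (hC : HasDerivAt C C' x)
    (hD : HasDerivAt D D' x) :
    HasDerivAt (fun u => fromBlocks (A u) (B u) (C u) (D u)) (fromBlocks A' B' C' D') x := by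
  let L : (Matrix n l 𝕜 × Matrix n m 𝕜) × (Matrix o l 𝕜 × Matrix o m 𝕜) →ₗ[𝕜]
      Matrix (n ⊕ o) (l ⊕ m) 𝕜 :=
    { toFun := fun X => fromBlocks X.1.1 X.1.2 X.2.1 X.2.2
      map_add' := fun X Y => (fromBlocks_add ..).symm
      map_smul' := fun c X => (fromBlocks_smul ..).symm }
  exact (LinearMap.toContinuousLinearMap L).hasFDerivAt.comp_hasDerivAt x
    ((hA.prodMk hB).prodMk (hC.prodMk hD))

theorem Matrix.exp_smul_eq_one_add_smul_of_mul_self_eq_zero [DecidableEq n] {D : Matrix n n ℝ}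
    (hD : D * D = 0) (t : ℝ) : NormedSpace.exp (t • D) = 1 + t • D := by
  refine exp_smul_eq_of_hasDerivAt_mul (f := fun u => 1 + u • D) (by simp) (fun s => ?_) t
  simpa [mul_add, hD] using ((hasDerivAt_id s).smul_const D).const_add 1

theorem Matrix.exp_smul_fromBlocks_of_hasDerivAt [DecidableEq m] [DecidableEq n]
    {A : Matrix m m ℝ} {C : Matrix m n ℝ} {D : Matrix n n ℝ} {P : ℝ → Matrix m n ℝ}
    (hP0 : P 0 = 0) (hP : ∀ s, HasDerivAt P (A * P s + C * NormedSpace.exp (s • D)) s) (t : ℝ) :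
    NormedSpace.exp (t • fromBlocks A C 0 D) =
      fromBlocks (NormedSpace.exp (t • A)) (P t) 0 (NormedSpace.exp (t • D)) := by
  refine exp_smul_eq_of_hasDerivAt_mul
    (f := fun u => fromBlocks (NormedSpace.exp (u • A)) (P u) 0 (NormedSpace.exp (u • D)))
    (by simp [hP0]) (fun s => ?_) t
  refine ((hasDerivAt_exp_smul_const' A s).matrix_fromBlocks (hP s) (hasDerivAt_const s 0)
    (hasDerivAt_exp_smul_const' D s)).congr_deriv ?_
  simp [fromBlocks_multiply]
  -- the two sides differ only in which (defeq) topology `exp` is elaborated with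
  exact ⟨rfl, rfl⟩

theorem hasDerivAt_expIntegral_mul_add {θ : ℝ} {X : Matrix m m ℝ} [DecidableEq m] [DecidableEq n]
    (hX : X ^ 3 = -θ ^ 2 • X) (hθ : θ ≠ 0) (C : Matrix m n ℝ) (D : Matrix n n ℝ) (s : ℝ) :
    HasDerivAt (fun u => expIntegral₁ θ X u * C + expIntegral₂ θ X u * (C * D))
      (X * (expIntegral₁ θ X s * C + expIntegral₂ θ X s * (C * D)) + C * (1 + s • D)) s := by
  refine (((hasDerivAt_expIntegral₁ hX hθ s).matrix_mul_const C).add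
    ((hasDerivAt_expIntegral₂ hθ s).matrix_mul_const (C * D))).congr_deriv ?_
  nth_rewrite 2 [expIntegral₁_eq_smul_one_add_mul_expIntegral₂ hX hθ]
  simp only [Matrix.add_mul, Matrix.mul_add, Matrix.one_mul, Matrix.mul_one, Matrix.mul_assoc,
    Matrix.smul_mul, Matrix.mul_smul]
  abel

end MatrixCalculus

theorem hat_pow_three (ω : EuclideanSpace ℝ (Fin 3)) : hat ω ^ 3 = -‖ω‖ ^ 2 • hat ω := by
  rw [EuclideanSpace.real_norm_sq_eq]
  ext i j
  fin_cases i <;> fin_cases j <;>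
    simp [hat, pow_succ, Matrix.mul_apply, Fin.sum_univ_three] <;> ring

theorem cols_mulVec (X Y : Matrix (Fin 3) (Fin 3) ℝ) (u : Fin 3 → ℝ) :
    cols (X *ᵥ u) (Y *ᵥ u) = X * cols u 0 + Y * cols 0 u := by
  ext i j
  fin_cases j <;> simp [cols, Matrix.mul_apply, Matrix.mulVec, dotProduct]

theorem cols_zero_mul_shift (u : Fin 3 → ℝ) : cols u 0 * !![(0 : ℝ), 1; 0, 0] = cols 0 u := by
  ext i j
  fin_cases j <;> simp [cols, Matrix.mul_apply, Fin.sum_univ_two]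

theorem stmt15 (ω a : EuclideanSpace ℝ (Fin 3)) (θ : ℝ) (hθ : θ = ‖ω‖) (hθ0 : θ ≠ 0)
    (Ω : Matrix (Fin 3) (Fin 3) ℝ) (hΩ : Ω = hat ω)
    (A_N : Matrix (Fin 3) (Fin 2) ℝ) (hAN : A_N = cols (fun i => a i) 0)
    (B : Matrix (Fin 2) (Fin 2) ℝ) (hB : B = !![0, 1; 0, 0])
    (N : Matrix (Fin 3 ⊕ Fin 2) (Fin 3 ⊕ Fin 2) ℝ) (hN : N = Matrix.fromBlocks Ω A_N 0 B)
    (t : ℝ)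
    (P_N : Matrix (Fin 3) (Fin 2) ℝ)
    (hPN : P_N = cols
      ((t • (1 : Matrix (Fin 3) (Fin 3) ℝ)
        + ((1 - Real.cos (θ * t)) / θ ^ 2) • Ω
        + ((θ * t - Real.sin (θ * t)) / θ ^ 3) • Ω ^ 2).mulVec a)
      (((t ^ 2 / 2) • (1 : Matrix (Fin 3) (Fin 3) ℝ)
        + ((θ * t - Real.sin (θ * t)) / θ ^ 3) • Ω
        + ((θ ^ 2 * t ^ 2 / 2 - 1 + Real.cos (θ * t)) / θ ^ 4) • Ω ^ 2).mulVec a)) :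
    NormedSpace.exp (t • N) =
      Matrix.fromBlocks (NormedSpace.exp (t • Ω)) P_N 0 (1 + t • B) := by
  have hΩ3 : Ω ^ 3 = -θ ^ 2 • Ω := by rw [hΩ, hθ, hat_pow_three]
  have hB2 : B * B = 0 := by
    rw [hB]; ext i j; fin_cases i <;> fin_cases j <;> simp
  have hP : P_N = expIntegral₁ θ Ω t * A_N + expIntegral₂ θ Ω t * (A_N * B) := by
    rw [hPN, hAN, hB, cols_zero_mul_shift, cols_mulVec]
    rfl
  rw [hN, hP, ← exp_smul_eq_one_add_smul_of_mul_self_eq_zero hB2]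
  refine exp_smul_fromBlocks_of_hasDerivAt (A := Ω) (C := A_N) (D := B)
    (P := fun u => expIntegral₁ θ Ω u * A_N + expIntegral₂ θ Ω u * (A_N * B)) ?_ (fun s => ?_) t
  · simp
  · rw [exp_smul_eq_one_add_smul_of_mul_self_eq_zero hB2]
    exact hasDerivAt_expIntegral_mul_add hΩ3 hθ0 A_N B s
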